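/- Let (Ω, F, μ) be a probability space, let C > 0 and ρ ∈ ℝ, and let ((W_n, G_n))_{n∈ℕ} be a sequence of ℝ²-valued random vectors that are mutually independent (but not necessarily identically distributed). Assume that for every n: 0 ≤ W_n ≤ C almost surely, 0 ≤ G_n ≤ 1 almost surely, E[W_n] = 1, and E[W_n·G_n] = ρ. Then almost surely (∑_{i=0}^{n−1} W_i·G_i) / (∑_{i=0}^{n−1} W_i) → ρ as n → ∞. In particular, the weighted importance sampling estimator with multiple behavior policies whose action probabilities are bounded below by ε > 0 on the support of the target policy is a consistent estimator of ρ. -/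

import Mathlib

/-!
Both averages are strong laws of large numbers for independent, uniformly bounded (not
identically distributed) variables: `n⁻¹ ∑_{i<n} W_i → 1` and `n⁻¹ ∑_{i<n} W_i G_i → ρ` almost
surely, and the estimator is their quotient. The strong law is proved by the classical
second-moment argument: for the centered partial sums `S_N`, independence and Popoviciu's
inequality give `E[S_N²] ≤ N ((b - a) / 2)²`, so `∑ₙ E[(S_{n²} / n²)²] < ∞` and `S_{n²} / n² → 0`
almost surely; between consecutive squares the partial sums move by `O(n)`.
-/

open Filter Finset MeasureTheory ProbabilityTheory Topology

theorem tendsto_sum_range_div_of_tendsto_sq {y : ℕ → ℝ} {B : ℝ} (hy : ∀ i, |y i| ≤ B)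
    (h : Tendsto (fun n : ℕ => (∑ i ∈ range (n ^ 2), y i) / (n : ℝ) ^ 2) atTop (𝓝 0)) :
    Tendsto (fun m : ℕ => (∑ i ∈ range m, y i) / m) atTop (𝓝 0) := by
  have hbound : ∀ m : ℕ, 1 ≤ m → ‖(∑ i ∈ range m, y i) / m‖ ≤
      |∑ i ∈ range (m.sqrt ^ 2), y i| / (m.sqrt : ℝ) ^ 2 + 2 * B / m.sqrt := by
    intro m hm
    set n := m.sqrt
    have hn : (0 : ℝ) < n := by exact_mod_cast Nat.sqrt_pos.2 hm
    have hnm : n ^ 2 ≤ m := Nat.sqrt_le' m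
    have hgap : ((m - n ^ 2 : ℕ) : ℝ) ≤ 2 * n := by
      have : m < n ^ 2 + 2 * n + 1 := by linarith [Nat.lt_succ_sqrt' m]
      exact_mod_cast (by omega : m - n ^ 2 ≤ 2 * n)
    have htail : |∑ i ∈ Ico (n ^ 2) m, y i| ≤ 2 * n * B := by
      calc |∑ i ∈ Ico (n ^ 2) m, y i| ≤ #(Ico (n ^ 2) m) • B :=
            (abs_sum_le_sum_abs _ _).trans (sum_le_card_nsmul _ _ _ fun i _ => hy i)
        _ = (m - n ^ 2 : ℕ) * B := by rw [Nat.card_Ico, nsmul_eq_mul]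
        _ ≤ 2 * n * B := by gcongr; exact (abs_nonneg _).trans (hy 0)
    rw [← sum_range_add_sum_Ico _ hnm, Real.norm_eq_abs, abs_div, Nat.abs_cast]
    calc |∑ i ∈ range (n ^ 2), y i + ∑ i ∈ Ico (n ^ 2) m, y i| / m
        ≤ (|∑ i ∈ range (n ^ 2), y i| + 2 * n * B) / (n : ℝ) ^ 2 := by
          gcongr
          · exact add_nonneg (abs_nonneg _) ((abs_nonneg _).trans htail)
          · exact (abs_add_le _ _).trans (by gcongr)
          · exact_mod_cast hnm
      _ = _ := by field_simp
  have hsqrt : Tendsto Nat.sqrt atTop atTop :=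
    tendsto_atTop_atTop.2 fun c => ⟨c ^ 2, fun m hm => by simpa using Nat.sqrt_le_sqrt hm⟩
  have hlim : Tendsto (fun n : ℕ => |∑ i ∈ range (n ^ 2), y i| / (n : ℝ) ^ 2 + 2 * B / n)
      atTop (𝓝 0) := by
    simpa [abs_div] using h.abs.add (tendsto_const_div_atTop_nhds_zero_nat (2 * B))
  exact squeeze_zero_norm' ((eventually_ge_atTop 1).mono hbound) (hlim.comp hsqrt)

section

variable {Ω : Type*} [MeasurableSpace Ω] {μ : Measure Ω}

theorem ae_tendsto_zero_of_summable_integral {f : ℕ → Ω → ℝ} (hf_nonneg : ∀ n, 0 ≤ f n)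
    (hf_int : ∀ n, Integrable (f n) μ)
    (hsum : Summable fun n => ∫ ω, f n ω ∂μ) :
    ∀ᵐ ω ∂μ, Tendsto (fun n => f n ω) atTop (𝓝 0) := by
  have hmeas : ∀ n, AEMeasurable (fun ω => ENNReal.ofReal (f n ω)) μ :=
    fun n => (hf_int n).aemeasurable.ennreal_ofReal
  have hfin : ∫⁻ ω, ∑' n, ENNReal.ofReal (f n ω) ∂μ ≠ ⊤ := by
    rw [lintegral_tsum hmeas]
    simp_rw [← ofReal_integral_eq_lintegral_ofReal (hf_int _)
      (Eventually.of_forall (hf_nonneg _))]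
    rw [← ENNReal.ofReal_tsum_of_nonneg (fun n => integral_nonneg (hf_nonneg n)) hsum]
    exact ENNReal.ofReal_ne_top
  filter_upwards [ae_lt_top' (AEMeasurable.tsum hmeas) hfin] with ω hω
  have := (ENNReal.tendsto_toReal ENNReal.zero_ne_top).comp
    (ENNReal.tendsto_atTop_zero_of_tsum_ne_top hω.ne)
  simpa [Function.comp_def, ENNReal.toReal_ofReal (hf_nonneg _ ω)] using this

variable [IsProbabilityMeasure μ]

theorem variance_sum_le_card_mul {ι : Type*} {Y : ι → Ω → ℝ} {a b : ℝ} (s : Finset ι)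
    (hY : ∀ i, AEMeasurable (Y i) μ) (hindep : Pairwise fun i j => IndepFun (Y i) (Y j) μ)
    (hbdd : ∀ i, ∀ᵐ ω ∂μ, Y i ω ∈ Set.Icc a b) :
    Var[∑ i ∈ s, Y i; μ] ≤ #s * ((b - a) / 2) ^ 2 := by
  rw [IndepFun.variance_sum (fun i _ => memLp_of_bounded (hbdd i) (hY i).aestronglyMeasurable 2)
    (fun i _ j _ hij => hindep hij)]
  simpa using sum_le_card_nsmul s _ _ fun i _ => variance_le_sq_of_bounded (hbdd i) (hY i)

theorem ae_tendsto_sum_sub_integral_div {Y : ℕ → Ω → ℝ} {a b : ℝ}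
    (hY : ∀ i, AEMeasurable (Y i) μ) (hindep : Pairwise fun i j => IndepFun (Y i) (Y j) μ)
    (hbdd : ∀ i, ∀ᵐ ω ∂μ, Y i ω ∈ Set.Icc a b) :
    ∀ᵐ ω ∂μ, Tendsto (fun n : ℕ => (∑ i ∈ range n, (Y i ω - μ[Y i])) / n) atTop (𝓝 0) := by
  set K := ((b - a) / 2) ^ 2
  have hint : ∀ i, Integrable (Y i) μ :=
    fun i => (memLp_of_bounded (hbdd i) (hY i).aestronglyMeasurable 1).integrable le_rfl
  set S : ℕ → Ω → ℝ := fun N => ∑ i ∈ range N, Y i - fun _ => μ[∑ i ∈ range N, Y i]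
  have hS : ∀ N ω, S N ω = ∑ i ∈ range N, (Y i ω - μ[Y i]) := by
    intro N ω
    simp [S, integral_finsetSum _ fun i _ => hint i, sum_sub_distrib]
  have hS_memLp : ∀ N, MemLp (S N) 2 μ := fun N =>
    (memLp_finsetSum' _ fun i _ =>
      memLp_of_bounded (hbdd i) (hY i).aestronglyMeasurable 2).sub (memLp_const _)
  have hS_sq : ∀ N, ∫ ω, S N ω ^ 2 ∂μ ≤ N * K := by
    intro N
    calc ∫ ω, S N ω ^ 2 ∂μ = Var[∑ i ∈ range N, Y i; μ] :=
          (variance_eq_integral (Finset.aemeasurable_sum _ fun i _ => hY i)).symm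
      _ ≤ N * K := by simpa using variance_sum_le_card_mul (range N) hY hindep hbdd
  set f : ℕ → Ω → ℝ := fun n ω => (S (n ^ 2) ω / (n : ℝ) ^ 2) ^ 2
  have hf_int : ∀ n, Integrable (f n) μ := fun n => by
    simpa only [f, div_pow] using (hS_memLp (n ^ 2)).integrable_sq.div_const (((n : ℝ) ^ 2) ^ 2)
  have hf_le : ∀ n : ℕ, ∫ ω, f n ω ∂μ ≤ K / (n : ℝ) ^ 2 := by
    intro n
    calc ∫ ω, f n ω ∂μ = (∫ ω, S (n ^ 2) ω ^ 2 ∂μ) / ((n : ℝ) ^ 2) ^ 2 := by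
          simp only [f, div_pow, integral_div]
      _ ≤ (n : ℝ) ^ 2 * K / ((n : ℝ) ^ 2) ^ 2 := by
          gcongr
          exact_mod_cast hS_sq (n ^ 2)
      _ = K / (n : ℝ) ^ 2 := by
          rcases eq_or_ne n 0 with rfl | hn
          · simp
          · field_simp
  have hf_sum : Summable fun n => ∫ ω, f n ω ∂μ :=
    ((Real.summable_nat_pow_inv.2 one_lt_two).mul_left K).of_nonneg_of_le
      (fun n => integral_nonneg fun ω => sq_nonneg _)
      (fun n => (hf_le n).trans_eq (div_eq_mul_inv _ _))
  have hmean : ∀ i, μ[Y i] ∈ Set.Icc a b :=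
    fun i => (convex_Icc a b).integral_mem isClosed_Icc (hbdd i) (hint i)
  have hdev : ∀ᵐ ω ∂μ, ∀ i, |Y i ω - μ[Y i]| ≤ b - a := ae_all_iff.2 fun i =>
    (hbdd i).mono fun ω hω => abs_sub_le_iff.2 ⟨by linarith [hω.2, (hmean i).1],
      by linarith [hω.1, (hmean i).2]⟩
  filter_upwards [ae_tendsto_zero_of_summable_integral (fun n ω => sq_nonneg _) hf_int hf_sum,
    hdev] with ω hf_lim hdev_ω
  refine tendsto_sum_range_div_of_tendsto_sq hdev_ω ?_
  rw [tendsto_zero_iff_abs_tendsto_zero]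
  simpa [f, Function.comp_def, Real.sqrt_sq_eq_abs, hS] using
    (Real.continuous_sqrt.tendsto 0).comp hf_lim

theorem ae_tendsto_sum_div_of_integral_eq {Y : ℕ → Ω → ℝ} {a b m : ℝ}
    (hY : ∀ i, AEMeasurable (Y i) μ) (hindep : Pairwise fun i j => IndepFun (Y i) (Y j) μ)
    (hbdd : ∀ i, ∀ᵐ ω ∂μ, Y i ω ∈ Set.Icc a b) (hmean : ∀ i, μ[Y i] = m) :
    ∀ᵐ ω ∂μ, Tendsto (fun n : ℕ => (∑ i ∈ range n, Y i ω) / n) atTop (𝓝 m) := by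
  filter_upwards [ae_tendsto_sum_sub_integral_div hY hindep hbdd] with ω hω
  refine (zero_add m ▸ hω.add_const m).congr' ?_
  filter_upwards [eventually_ne_atTop 0] with n hn
  simp only [hmean, sum_sub_distrib, sum_const, card_range, nsmul_eq_mul]
  field_simp
  ring

end

theorem wis_consistent_multiple_behavior_policies_general
    {Ω : Type*} [MeasurableSpace Ω] (μ : Measure Ω) [IsProbabilityMeasure μ]
    (C : ℝ) (ρ : ℝ)
    (X : ℕ → Ω → ℝ × ℝ) (hmeas : ∀ n, Measurable (X n))
    (hindep : iIndepFun X μ)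
    (hW_bdd : ∀ n, ∀ᵐ ω ∂μ, 0 ≤ (X n ω).1 ∧ (X n ω).1 ≤ C)
    (hG_bdd : ∀ n, ∀ᵐ ω ∂μ, 0 ≤ (X n ω).2 ∧ (X n ω).2 ≤ 1)
    (hW_mean : ∀ n, ∫ ω, (X n ω).1 ∂μ = 1)
    (hWG_mean : ∀ n, ∫ ω, (X n ω).1 * (X n ω).2 ∂μ = ρ) :
    ∀ᵐ ω ∂μ, Tendsto
      (fun n : ℕ => (∑ i ∈ Finset.range n, (X i ω).1 * (X i ω).2) /
        (∑ i ∈ Finset.range n, (X i ω).1))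
      atTop (nhds ρ) := by
  have hWG_bdd : ∀ n, ∀ᵐ ω ∂μ, (X n ω).1 * (X n ω).2 ∈ Set.Icc 0 C := fun n => by
    filter_upwards [hW_bdd n, hG_bdd n] with ω ⟨hW0, hWC⟩ ⟨hG0, hG1⟩
    exact ⟨mul_nonneg hW0 hG0, by nlinarith⟩
  have hW_avg := ae_tendsto_sum_div_of_integral_eq (Y := fun n ω => (X n ω).1)
    (fun n => (hmeas n).fst.aemeasurable)
    (fun i j hij => (hindep.indepFun hij).comp measurable_fst measurable_fst) hW_bdd hW_mean
  have hWG_avg := ae_tendsto_sum_div_of_integral_eq (Y := fun n ω => (X n ω).1 * (X n ω).2)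
    (fun n => ((hmeas n).fst.mul (hmeas n).snd).aemeasurable)
    (fun i j hij => (hindep.indepFun hij).comp (measurable_fst.mul measurable_snd)
      (measurable_fst.mul measurable_snd)) hWG_bdd hWG_mean
  filter_upwards [hW_avg, hWG_avg] with ω hW hWG
  refine (div_one ρ ▸ hWG.div hW one_ne_zero).congr' ?_
  filter_upwards [eventually_ne_atTop 0] with n hn
  exact div_div_div_cancel_right₀ (Nat.cast_ne_zero.2 hn) _ _

/-- **Theorem 2 (consistency of WIS with multiple behavior policies), probabilistic content.**
If `(W_n, G_n)` are mutually independent `ℝ²`-valued random vectors with `0 ≤ W_n ≤ C` a.s.,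
`0 ≤ G_n ≤ 1` a.s., `E[W_n] = 1`, and `E[W_n G_n] = ρ` for every `n`, then the weighted
importance sampling estimates `(∑_{i<n} W_i G_i) / (∑_{i<n} W_i)` converge almost surely to `ρ`. -/
theorem wis_consistent_multiple_behavior_policies
    {Ω : Type*} [MeasurableSpace Ω] (μ : Measure Ω) [IsProbabilityMeasure μ]
    (C : ℝ) (hC : 0 < C) (ρ : ℝ)
    (X : ℕ → Ω → ℝ × ℝ) (hmeas : ∀ n, Measurable (X n))
    (hindep : iIndepFun X μ)
    (hW_bdd : ∀ n, ∀ᵐ ω ∂μ, 0 ≤ (X n ω).1 ∧ (X n ω).1 ≤ C)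
    (hG_bdd : ∀ n, ∀ᵐ ω ∂μ, 0 ≤ (X n ω).2 ∧ (X n ω).2 ≤ 1)
    (hW_mean : ∀ n, ∫ ω, (X n ω).1 ∂μ = 1)
    (hWG_mean : ∀ n, ∫ ω, (X n ω).1 * (X n ω).2 ∂μ = ρ) :
    ∀ᵐ ω ∂μ, Tendsto
      (fun n : ℕ => (∑ i ∈ Finset.range n, (X i ω).1 * (X i ω).2) /
        (∑ i ∈ Finset.range n, (X i ω).1))
      atTop (nhds ρ) :=
  wis_consistent_multiple_behavior_policies_general μ C ρ X hmeas hindep hW_bdd hG_bdd hW_mean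
    hWG_mean
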